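/- Let n ≥ 3 and let r be an integer with ⌊n/2⌋ < r ≤ n − 1. Then the compound curling number of the r-th power of the path graph P_n equals 2^(n−1−r) · (2(r + 1) − n). -/

import Mathlib

open Finset

/-- The degree of a vertex `v` in a simple graph `G`: the number of its neighbours. -/
noncomputable def gdeg {V : Type*} (G : SimpleGraph V) (v : V) : ℕ :=
  (G.neighborSet v).ncard

/-- The compound curling number of a finite simple graph: the product, over all
values `d` occurring as a vertex degree of `G`, of the number of vertices of degree `d`. -/
noncomputable def compoundCurlingNumber {V : Type*} [Fintype V] (G : SimpleGraph V) : ℕ :=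
  ∏ d ∈ Finset.univ.image (gdeg G), (Finset.univ.filter fun u => gdeg G u = d).card

/-- The `r`-th power of a simple graph `G`: same vertex set, two distinct vertices
adjacent iff their distance in `G` is (finite and) at most `r`. -/
def SimpleGraph.power {V : Type*} (G : SimpleGraph V) (r : ℕ) : SimpleGraph V where
  Adj u v := u ≠ v ∧ G.Reachable u v ∧ G.dist u v ≤ r
  symm := by
    constructor
    rintro u v ⟨h1, h2, h3⟩
    exact ⟨h1.symm, h2.symm, by rwa [SimpleGraph.dist_comm]⟩
  loopless := by
    constructor
    rintro v ⟨h1, -, -⟩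
    exact h1 rfl

/-!
In `P_n^r` the vertex `i` is adjacent to every other vertex of `[i - r, i + r] ∩ [0, n - 1]`,
so its degree is `min (i + r) (n - 1) - (i - r)` (truncated subtraction). When `2r > n`, the
`2(r + 1) - n` middle vertices `n - 1 - r, …, r` have full degree `n - 1`, and every other
degree `d ∈ [r, n - 2]` is taken by exactly the two vertices `d - r` and `n - 1 - (d - r)`.
-/

namespace SimpleGraph

variable {V : Type*}

theorem power_adj_of_preconnected {G : SimpleGraph V} (hG : G.Preconnected) {r : ℕ} {u v : V} :
    (G.power r).Adj u v ↔ u ≠ v ∧ G.dist u v ≤ r :=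
  ⟨fun ⟨hne, _, hd⟩ => ⟨hne, hd⟩, fun ⟨hne, hd⟩ => ⟨hne, hG u v, hd⟩⟩

theorem gdeg_eq_card_filter_adj [Fintype V] (G : SimpleGraph V) [DecidableRel G.Adj] (v : V) :
    gdeg G v = #{u | G.Adj v u} := by
  rw [gdeg, Set.ncard_eq_toFinset_card', ← neighborFinset_def, neighborFinset_eq_filter]

variable {n : ℕ}

theorem natDist_le_walk_length_pathGraph {u v : Fin n} (W : (pathGraph n).Walk u v) :
    Nat.dist u v ≤ W.length := by
  induction W with
  | nil => simp
  | cons h _ ih =>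
    rw [pathGraph_adj] at h
    simp only [Nat.dist, Walk.length_cons] at ih ⊢
    omega

theorem pathGraph_exists_walk_length_of_le {u v : Fin n} (huv : u ≤ v) :
    ∃ W : (pathGraph n).Walk u v, W.length = v - u := by
  obtain ⟨k, hk⟩ : ∃ k, (v : ℕ) = u + k := ⟨v - u, by omega⟩
  induction k generalizing u with
  | zero =>
    obtain rfl : u = v := Fin.ext (by omega)
    exact ⟨.nil, by simp⟩
  | succ k ih =>
    let w : Fin n := ⟨u + 1, by omega⟩
    obtain ⟨W, hW⟩ := ih (u := w) (Fin.le_iff_val_le_val.2 (by simp [w]; omega))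
      (by simp [w]; omega)
    exact ⟨.cons (pathGraph_adj.2 (Or.inl rfl)) W, by simp [hW, w]; omega⟩

theorem pathGraph_dist (u v : Fin n) : (pathGraph n).dist u v = Nat.dist u v := by
  wlog huv : u ≤ v generalizing u v
  · rw [dist_comm, Nat.dist_comm, this v u (le_of_not_ge huv)]
  obtain ⟨W, hW⟩ := pathGraph_exists_walk_length_of_le huv
  obtain ⟨P, hP⟩ := Reachable.exists_walk_length_eq_dist ⟨W⟩
  refine le_antisymm ?_ (hP ▸ natDist_le_walk_length_pathGraph P)
  calc (pathGraph n).dist u v ≤ W.length := dist_le W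
    _ = Nat.dist u v := by rw [hW, Nat.dist]; omega

theorem pathGraph_power_adj {r : ℕ} {u v : Fin n} :
    ((pathGraph n).power r).Adj u v ↔ (u : ℕ) ≠ v ∧ Nat.dist u v ≤ r := by
  rw [power_adj_of_preconnected (pathGraph_preconnected n), pathGraph_dist, Fin.val_ne_iff]

end SimpleGraph

theorem Fin.card_filter_univ_val {n : ℕ} (p : ℕ → Prop) [DecidablePred p] :
    #{u : Fin n | p u} = #{x ∈ range n | p x} := by
  rw [← card_map Fin.valEmbedding, ← Nat.Iio_eq_range, ← Fin.map_valEmbedding_univ, filter_map]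
  rfl

theorem compoundCurlingNumber_eq_of_gdeg_eq_val {n : ℕ} {G : SimpleGraph (Fin n)} {F : ℕ → ℕ}
    (hF : ∀ v, gdeg G v = F v) :
    compoundCurlingNumber G = ∏ d ∈ (range n).image F, #{x ∈ range n | F x = d} := by
  have himage : univ.image (gdeg G) = (range n).image F := by
    ext d
    simp only [mem_image, mem_univ, true_and, mem_range, hF]
    exact ⟨fun ⟨v, hv⟩ => ⟨v, v.isLt, hv⟩, fun ⟨x, hx, hxd⟩ => ⟨⟨x, hx⟩, hxd⟩⟩
  rw [compoundCurlingNumber, himage]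
  refine prod_congr rfl fun d _ => ?_
  simp only [hF]
  exact Fin.card_filter_univ_val (F · = d)

def pathPowerDegree (n r x : ℕ) : ℕ := min (x + r) (n - 1) - (x - r)

theorem gdeg_pathGraph_power {n r : ℕ} (v : Fin n) :
    gdeg ((SimpleGraph.pathGraph n).power r) v = pathPowerDegree n r v := by
  classical
  have hneighbours : {x ∈ range n | (v : ℕ) ≠ x ∧ Nat.dist v x ≤ r} =
      (Icc (v - r) (min (v + r) (n - 1))).erase v := by
    ext x
    simp only [mem_filter, mem_range, mem_erase, mem_Icc, Nat.dist.eq_1]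
    omega
  simp only [SimpleGraph.gdeg_eq_card_filter_adj, SimpleGraph.pathGraph_power_adj]
  rw [Fin.card_filter_univ_val (fun x => (v : ℕ) ≠ x ∧ Nat.dist v x ≤ r), hneighbours,
    card_erase_of_mem (by simp only [mem_Icc]; omega), Nat.card_Icc, pathPowerDegree]
  omega

section LargePower

variable {n r : ℕ}

theorem image_pathPowerDegree (h2r : n < 2 * r) (hr : r ≤ n - 1) :
    (range n).image (pathPowerDegree n r) = Icc r (n - 1) := by
  ext d
  simp only [mem_image, mem_range, mem_Icc, pathPowerDegree]
  exact ⟨by omega, fun _ => ⟨d - r, by omega, by omega⟩⟩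

theorem card_filter_pathPowerDegree_eq_sub_one (h2r : n < 2 * r) (hr : r ≤ n - 1) :
    #{x ∈ range n | pathPowerDegree n r x = n - 1} = 2 * (r + 1) - n := by
  have : {x ∈ range n | pathPowerDegree n r x = n - 1} = Icc (n - 1 - r) r := by
    ext x
    rw [mem_filter, mem_range, mem_Icc, pathPowerDegree]
    omega
  rw [this, Nat.card_Icc]
  omega

theorem card_filter_pathPowerDegree_eq_of_mem_Ico (h2r : n < 2 * r) {d : ℕ}
    (hd : d ∈ Ico r (n - 1)) :
    #{x ∈ range n | pathPowerDegree n r x = d} = 2 := by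
  rw [mem_Ico] at hd
  have : {x ∈ range n | pathPowerDegree n r x = d} = {d - r, n - 1 - (d - r)} := by
    ext x
    rw [mem_filter, mem_range, mem_insert, mem_singleton, pathPowerDegree]
    omega
  rw [this, card_pair (by omega)]

theorem prod_card_filter_pathPowerDegree (h2r : n < 2 * r) (hr : r ≤ n - 1) :
    ∏ d ∈ (range n).image (pathPowerDegree n r), #{x ∈ range n | pathPowerDegree n r x = d} =
      2 ^ (n - 1 - r) * (2 * (r + 1) - n) := by
  rw [image_pathPowerDegree h2r hr, ← Ico_insert_right (by omega),
    prod_insert (by simp), card_filter_pathPowerDegree_eq_sub_one h2r hr,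
    prod_congr rfl fun d hd => card_filter_pathPowerDegree_eq_of_mem_Ico h2r hd, prod_const,
    Nat.card_Ico, mul_comm]

end LargePower

theorem compoundCurlingNumber_pathGraph_power_of_gt_general (n r : ℕ)
    (hr1 : n / 2 < r) (hr2 : r ≤ n - 1) :
    compoundCurlingNumber ((SimpleGraph.pathGraph n).power r) =
      2 ^ (n - 1 - r) * (2 * (r + 1) - n) := by
  rw [compoundCurlingNumber_eq_of_gdeg_eq_val gdeg_pathGraph_power]
  exact prod_card_filter_pathPowerDegree (by omega) hr2

/-- For `n ≥ 3` and `⌊n/2⌋ < r ≤ n - 1`, the compound curling number of the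
`r`-th power of the path graph `P_n` is `2 ^ (n - 1 - r) * (2(r + 1) - n)`. -/
theorem compoundCurlingNumber_pathGraph_power_of_gt (n r : ℕ) (hn : 3 ≤ n)
    (hr1 : n / 2 < r) (hr2 : r ≤ n - 1) :
    compoundCurlingNumber ((SimpleGraph.pathGraph n).power r) =
      2 ^ (n - 1 - r) * (2 * (r + 1) - n) :=
  compoundCurlingNumber_pathGraph_power_of_gt_general n r hr1 hr2
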